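/- Let r ≥ 2 and n ≥ 2r. If X ⊆ [2,n] satisfies |X| > r, then X is good: every left-compressed intersecting family 𝒜 ⊆ [n]^(r) satisfies |𝒜(X)| ≤ |𝒮(X)|, where 𝒮 is the star at 1. -/

import Mathlib

open Finset

/-- The ij-compression of a finite set: replace j by i if possible. -/
def comp (i j : ℕ) (A : Finset ℕ) : Finset ℕ :=
  if j ∈ A ∧ i ∉ A then insert i (A.erase j) else A

/-- The ij-compression of a family of sets. -/
def compFam (i j : ℕ) (𝒜 : Finset (Finset ℕ)) : Finset (Finset ℕ) :=
  (𝒜.filter (fun A => comp i j A ∈ 𝒜)) ∪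
    ((𝒜.filter (fun A => comp i j A ∉ 𝒜)).image (comp i j))

/-- A family is intersecting if any two members meet. -/
def IsIntersecting (𝒜 : Finset (Finset ℕ)) : Prop :=
  ∀ A ∈ 𝒜, ∀ B ∈ 𝒜, (A ∩ B).Nonempty

/-- A family is left-compressed if it is invariant under all ij-compressions, i < j. -/
def LeftCompressed (𝒜 : Finset (Finset ℕ)) : Prop :=
  ∀ i j : ℕ, 1 ≤ i → i < j → compFam i j 𝒜 = 𝒜

/-- The compression order: same size and the k-th smallest element of `A` is at most
the k-th smallest element of `B`. -/
def domLE (A B : Finset ℕ) : Prop :=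
  A.card = B.card ∧ ∀ (k : ℕ) (a b : ℕ), (A.sort (· ≤ ·))[k]? = some a →
    (B.sort (· ≤ ·))[k]? = some b → a ≤ b

/-- `A ≺ G` : `A` is generated by `G`, i.e. `|G| ≤ |A|` and the k-th smallest element
of `A` is at most the k-th smallest element of `G` for `k ≤ |G|`. -/
def prec (A G : Finset ℕ) : Prop :=
  G.card ≤ A.card ∧ ∀ (k : ℕ) (a g : ℕ), (A.sort (· ≤ ·))[k]? = some a →
    (G.sort (· ≤ ·))[k]? = some g → a ≤ g

/-- The r-element subsets of [n] = {1, ..., n}. -/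
def uniformOn (n r : ℕ) : Finset (Finset ℕ) := (Icc 1 n).powersetCard r

/-- The family ⟨𝒢⟩_r^n generated by 𝒢 under inclusion. -/
def genSub (r n : ℕ) (𝒢 : Finset (Finset ℕ)) : Finset (Finset ℕ) :=
  (uniformOn n r).filter (fun A => ∃ G ∈ 𝒢, G ⊆ A)

open Classical in
/-- The family ⟨𝒢⟩_r^n generated by 𝒢 under ≺. -/
noncomputable def genP (r n : ℕ) (𝒢 : Finset (Finset ℕ)) : Finset (Finset ℕ) :=
  (uniformOn n r).filter (fun A => ∃ G ∈ 𝒢, prec A G)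

/-- ℱ(X) : the members of ℱ meeting X. -/
def hitting (ℱ : Finset (Finset ℕ)) (X : Finset ℕ) : Finset (Finset ℕ) :=
  ℱ.filter (fun A => (A ∩ X).Nonempty)

/-- The star at 1 in [n]^(r). -/
def star (n r : ℕ) : Finset (Finset ℕ) := (uniformOn n r).filter (fun A => 1 ∈ A)

/-- A maximal left-compressed intersecting subfamily of [n]^(r). -/
def MaxLCI (n r : ℕ) (𝒜 : Finset (Finset ℕ)) : Prop :=
  𝒜 ⊆ uniformOn n r ∧ LeftCompressed 𝒜 ∧ IsIntersecting 𝒜 ∧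
    ∀ B ∈ uniformOn n r, B ∉ 𝒜 → ¬ IsIntersecting (insert B 𝒜)

/-- X is good for n and r. -/
def IsGood (n r : ℕ) (X : Finset ℕ) : Prop :=
  ∀ 𝒜 ⊆ uniformOn n r, LeftCompressed 𝒜 → IsIntersecting 𝒜 →
    (hitting 𝒜 X).card ≤ (hitting (star n r) X).card

/-!
Call a family shifted if it is closed under the compressions `comp i j`, `1 ≤ i < j`, and prove
the bound for all shifted intersecting `𝒜 ⊆ [n]^(r)`, `2r ≤ n`, and all `X ⊆ [2,n]` with `|X| > r`
at once, by induction on `n`.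

For `r ≤ 1` such a family lies in `{{1}}` and misses `X`. For `n = 2r`, fixing the members through
`1` and sending every other `A` to its complement `[n] \ A` injects `𝒜(X)` into `𝒮(X)`: the
complement has size `r`, contains `1`, meets `X` because `|X| > r = |A|`, and is not in `𝒜`.

For `n > 2r`, split both families according to whether their members contain `n`. The members
avoiding `n`, and the links `A \ {n}` of those containing it, are again shifted and intersecting
(two links that were disjoint would stay disjoint after compressing `n` to a point outside both,
which exists as `n > 2r`), and the two parts of the star are smaller stars; this settles every `X`
avoiding `n`. If `n ∈ X ≠ [2,n]`, trading `n` for some `y ∉ X` can only increase `|𝒜(X)|`, since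
`𝒜` is shifted, and only decrease `|𝒮(X)|`. Finally `X = [2,n]` asks for `|𝒜| ≤ |𝒮|`, the
Erdős–Ko–Rado bound for shifted families, which follows from the same split since for `r ≥ 2`
every member of an `r`-uniform family on `[m]` meets `[2,m]`.
-/

section Compression

variable {i j a : ℕ} {A : Finset ℕ}

lemma comp_of_mem_of_notMem (hj : j ∈ A) (hi : i ∉ A) : comp i j A = insert i (A.erase j) :=
  if_pos ⟨hj, hi⟩

lemma comp_of_notMem (hj : j ∉ A) : comp i j A = A := if_neg fun h => hj h.1

lemma comp_subset_insert : comp i j A ⊆ insert i A := by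
  unfold comp; split_ifs
  · exact insert_subset_insert _ (erase_subset _ _)
  · exact subset_insert _ _

lemma erase_subset_comp : A.erase j ⊆ comp i j A := by
  unfold comp; split_ifs
  · exact subset_insert _ _
  · exact erase_subset _ _

lemma card_comp : #(comp i j A) = #A := by
  unfold comp; split_ifs with h
  · rw [card_insert_of_notMem (fun h' => h.2 (mem_of_mem_erase h')), card_erase_add_one h.1]
  · rfl

lemma comp_insert (hi : i ≠ a) (hj : j ≠ a) : comp i j (insert a A) = insert a (comp i j A) := by
  unfold comp
  simp only [mem_insert, hi, hj, false_or]
  split_ifs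
  · rw [insert_comm, erase_insert_of_ne hj.symm]
  · rfl

end Compression

lemma mem_uniformOn {n r : ℕ} {A : Finset ℕ} : A ∈ uniformOn n r ↔ A ⊆ Icc 1 n ∧ #A = r :=
  mem_powersetCard

lemma mem_star {n r : ℕ} {A : Finset ℕ} : A ∈ star n r ↔ A ⊆ Icc 1 n ∧ #A = r ∧ 1 ∈ A := by
  rw [_root_.star, mem_filter, mem_uniformOn, and_assoc]

def IsShifted (𝒜 : Finset (Finset ℕ)) : Prop :=
  ∀ ⦃i j : ℕ⦄, 1 ≤ i → i < j → ∀ ⦃A⦄, A ∈ 𝒜 → comp i j A ∈ 𝒜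

lemma LeftCompressed.isShifted {𝒜 : Finset (Finset ℕ)} (h : LeftCompressed 𝒜) : IsShifted 𝒜 := by
  intro i j hi hij A hA
  by_contra hc
  have : comp i j A ∈ compFam i j 𝒜 :=
    mem_union_right _ (mem_image_of_mem _ (mem_filter.2 ⟨hA, hc⟩))
  exact hc (h i j hi hij ▸ this)

lemma IsIntersecting.mono {𝒜 ℬ : Finset (Finset ℕ)} (h : IsIntersecting 𝒜) (hℬ : ℬ ⊆ 𝒜) :
    IsIntersecting ℬ := fun A hA B hB => h A (hℬ hA) B (hℬ hB)

section Link

variable {n r : ℕ} {𝒜 : Finset (Finset ℕ)}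

lemma nonMemberSubfamily_subset_uniformOn (h𝒜 : 𝒜 ⊆ uniformOn (n + 1) r) :
    𝒜.nonMemberSubfamily (n + 1) ⊆ uniformOn n r := by
  intro A hA
  rw [mem_nonMemberSubfamily] at hA
  obtain ⟨hA1, hc⟩ := mem_uniformOn.1 (h𝒜 hA.1)
  refine mem_uniformOn.2 ⟨fun a ha => ?_, hc⟩
  have := mem_Icc.1 (hA1 ha)
  have : a ≠ n + 1 := fun h => hA.2 (h ▸ ha)
  exact mem_Icc.2 (by omega)

lemma memberSubfamily_subset_uniformOn (h𝒜 : 𝒜 ⊆ uniformOn (n + 1) (r + 1)) :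
    𝒜.memberSubfamily (n + 1) ⊆ uniformOn n r := by
  intro A hA
  rw [mem_memberSubfamily] at hA
  obtain ⟨hA1, hc⟩ := mem_uniformOn.1 (h𝒜 hA.1)
  refine mem_uniformOn.2 ⟨fun a ha => ?_, by rw [card_insert_of_notMem hA.2] at hc; omega⟩
  have := mem_Icc.1 (hA1 (mem_insert_of_mem ha))
  have : a ≠ n + 1 := fun h => hA.2 (h ▸ ha)
  exact mem_Icc.2 (by omega)

lemma IsShifted.nonMemberSubfamily (h : IsShifted 𝒜) (h𝒜 : 𝒜 ⊆ uniformOn (n + 1) r) :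
    IsShifted (𝒜.nonMemberSubfamily (n + 1)) := by
  intro i j hi hij A hA
  rw [mem_nonMemberSubfamily] at hA ⊢
  refine ⟨h hi hij hA.1, ?_⟩
  by_cases hj : j ∈ A
  · have : j ≤ n + 1 := (mem_Icc.1 ((mem_uniformOn.1 (h𝒜 hA.1)).1 hj)).2
    exact fun hn => (mem_insert.1 (comp_subset_insert hn)).elim (by omega) hA.2
  · rw [comp_of_notMem hj]; exact hA.2

lemma IsShifted.memberSubfamily (h : IsShifted 𝒜) (h𝒜 : 𝒜 ⊆ uniformOn (n + 1) r) :
    IsShifted (𝒜.memberSubfamily (n + 1)) := by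
  intro i j hi hij A hA
  rw [mem_memberSubfamily] at hA ⊢
  by_cases hj : j ∈ A
  · have : j ≤ n + 1 := (mem_Icc.1 ((mem_uniformOn.1 (h𝒜 hA.1)).1 (mem_insert_of_mem hj))).2
    have hjn : j ≠ n + 1 := fun h => hA.2 (h ▸ hj)
    refine ⟨?_, fun hn => ?_⟩
    · rw [← comp_insert (by omega) hjn]; exact h hi hij hA.1
    · exact (mem_insert.1 (comp_subset_insert hn)).elim (by omega) hA.2
  · rwa [comp_of_notMem hj]

lemma IsIntersecting.memberSubfamily (hI : IsIntersecting 𝒜) (hS : IsShifted 𝒜)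
    (h𝒜 : 𝒜 ⊆ uniformOn (n + 1) (r + 1)) (hn : 2 * r < n) :
    IsIntersecting (𝒜.memberSubfamily (n + 1)) := by
  intro A hA B hB
  have hAr := mem_uniformOn.1 (memberSubfamily_subset_uniformOn h𝒜 hA)
  have hBr := mem_uniformOn.1 (memberSubfamily_subset_uniformOn h𝒜 hB)
  rw [mem_memberSubfamily] at hA hB
  obtain ⟨c, hc, hcAB⟩ : ∃ c ∈ Icc 1 n, c ∉ A ∪ B := by
    refine exists_mem_notMem_of_card_lt_card ?_
    calc #(A ∪ B) ≤ #A + #B := card_union_le A B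
      _ < #(Icc 1 n) := by rw [Nat.card_Icc]; omega
  rw [mem_union, not_or] at hcAB
  obtain ⟨hc1, hcn⟩ := mem_Icc.1 hc
  have hcA : insert c A ∈ 𝒜 := by
    have := hS hc1 (by omega : c < n + 1) hA.1
    rwa [comp_of_mem_of_notMem (mem_insert_self _ _) (by simp [hcAB.1]; omega),
      erase_insert hA.2] at this
  obtain ⟨d, hd⟩ := hI _ hcA _ hB.1
  simp only [mem_inter, mem_insert] at hd
  refine ⟨d, mem_inter.2 ⟨?_, ?_⟩⟩ <;> grind

end Link

section Star

variable {n r : ℕ}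

lemma star_subset_uniformOn : star n r ⊆ uniformOn n r := filter_subset _ _

lemma star_nonMemberSubfamily : (star (n + 1) r).nonMemberSubfamily (n + 1) = star n r := by
  ext A
  simp only [mem_nonMemberSubfamily, mem_star, subset_iff, mem_Icc]
  grind

lemma star_memberSubfamily (hn : 1 ≤ n) :
    (star (n + 1) (r + 1)).memberSubfamily (n + 1) = star n r := by
  ext A
  simp only [mem_memberSubfamily, mem_star, mem_insert, card_insert_eq_ite, subset_iff, mem_Icc]
  grind

lemma comp_mem_star {i j : ℕ} {A : Finset ℕ} (hi : 1 ≤ i) (hin : i ≤ n) (hj : j ≠ 1)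
    (hA : A ∈ star n r) : comp i j A ∈ star n r := by
  obtain ⟨hA, hc, h1⟩ := mem_star.1 hA
  refine mem_star.2
    ⟨fun a ha => ?_, card_comp.trans hc, erase_subset_comp (mem_erase.2 ⟨hj.symm, h1⟩)⟩
  rcases mem_insert.1 (comp_subset_insert ha) with rfl | ha
  · exact mem_Icc.2 ⟨hi, hin⟩
  · exact hA ha

end Star

section Hitting

variable {ℱ : Finset (Finset ℕ)} {X : Finset ℕ}

lemma mem_hitting {A : Finset ℕ} : A ∈ hitting ℱ X ↔ A ∈ ℱ ∧ (A ∩ X).Nonempty := mem_filter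

lemma hitting_nonMemberSubfamily (a : ℕ) :
    hitting (ℱ.nonMemberSubfamily a) X = (hitting ℱ X).nonMemberSubfamily a := filter_comm _ _ _

lemma hitting_memberSubfamily {a : ℕ} (ha : a ∉ X) :
    hitting (ℱ.memberSubfamily a) X = (hitting ℱ X).memberSubfamily a := by
  ext A
  simp only [mem_hitting, mem_memberSubfamily, insert_inter_of_notMem ha]
  tauto

lemma card_hitting_eq_add (ℱ : Finset (Finset ℕ)) {a : ℕ} (ha : a ∉ X) :
    #(hitting ℱ X) =
      #(hitting (ℱ.memberSubfamily a) X) + #(hitting (ℱ.nonMemberSubfamily a) X) := by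
  rw [hitting_memberSubfamily ha, hitting_nonMemberSubfamily,
    card_memberSubfamily_add_card_nonMemberSubfamily]

lemma hitting_Icc_two_eq_self {n r : ℕ} (hr : 2 ≤ r) (hℱ : ℱ ⊆ uniformOn n r) :
    hitting ℱ (Icc 2 n) = ℱ := by
  refine filter_true_of_mem fun A hA => ?_
  obtain ⟨hA, hc⟩ := mem_uniformOn.1 (hℱ hA)
  obtain ⟨a, ha, ha1⟩ := exists_mem_ne (by omega : 1 < #A) 1
  have := mem_Icc.1 (hA ha)
  exact ⟨a, mem_inter.2 ⟨ha, mem_Icc.2 (by omega)⟩⟩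

end Hitting

lemma card_hitting_insert_erase_le {ℱ : Finset (Finset ℕ)} {Z : Finset ℕ} {x y : ℕ}
    (hx : x ∈ Z) (hy : y ∉ Z) (hℱ : ∀ A ∈ ℱ, comp x y A ∈ ℱ) :
    #(hitting ℱ (insert y (Z.erase x))) ≤ #(hitting ℱ Z) := by
  have hmem : ∀ A ∈ hitting ℱ (insert y (Z.erase x)) \ hitting ℱ Z,
      A ∈ ℱ ∧ y ∈ A ∧ x ∉ A ∧ Disjoint A Z := by
    intro A hA
    rw [mem_sdiff, mem_hitting, mem_hitting, not_and, not_nonempty_iff_eq_empty,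
      ← disjoint_iff_inter_eq_empty] at hA
    obtain ⟨⟨hAℱ, a, ha⟩, hAZ⟩ := hA
    replace hAZ := hAZ hAℱ
    simp only [mem_inter, mem_insert, mem_erase] at ha
    refine ⟨hAℱ, ?_, disjoint_right.1 hAZ hx, hAZ⟩
    rcases ha with ⟨haA, rfl | ⟨-, haZ⟩⟩
    · exact haA
    · exact absurd haZ (disjoint_left.1 hAZ haA)
  -- `comp x y` maps the members meeting only the new set injectively to members meeting only `Z`.
  rw [← card_sdiff_le_card_sdiff_iff]
  refine card_le_card_of_injOn (comp x y) (fun A hA => ?_) (fun A hA B hB hAB => ?_)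
  · obtain ⟨hAℱ, hyA, hxA, hAZ⟩ := hmem A hA
    refine mem_sdiff.2 ⟨mem_hitting.2 ⟨hℱ A hAℱ, x, mem_inter.2 ⟨?_, hx⟩⟩, fun h => ?_⟩
    · rw [comp_of_mem_of_notMem hyA hxA]; exact mem_insert_self _ _
    · obtain ⟨a, ha⟩ := (mem_hitting.1 h).2
      rw [comp_of_mem_of_notMem hyA hxA] at ha
      simp only [mem_inter, mem_insert, mem_erase] at ha
      grind [disjoint_left]
  · obtain ⟨-, hyA, hxA, -⟩ := hmem A hA
    obtain ⟨-, hyB, hxB, -⟩ := hmem B hB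
    rw [comp_of_mem_of_notMem hyA hxA, comp_of_mem_of_notMem hyB hxB] at hAB
    have := congrArg (·.erase x) hAB
    simp only [erase_insert (fun h => hxA (mem_of_mem_erase h)),
      erase_insert (fun h => hxB (mem_of_mem_erase h))] at this
    rw [← insert_erase hyA, this, insert_erase hyB]

section Bounds

variable {n r : ℕ} {𝒜 : Finset (Finset ℕ)}

lemma subset_singleton_one_of_le_one (hS : IsShifted 𝒜) (hI : IsIntersecting 𝒜)
    (h𝒜 : 𝒜 ⊆ uniformOn n r) (hr : r ≤ 1) {A : Finset ℕ} (hA : A ∈ 𝒜) : A ⊆ {1} := by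
  intro a ha
  rw [mem_singleton]
  by_contra ha1
  obtain ⟨hAn, hc⟩ := mem_uniformOn.1 (h𝒜 hA)
  obtain rfl : A = {a} :=
    eq_singleton_iff_unique_mem.2 ⟨ha, fun b hb => card_le_one.1 (by omega) b hb a ha⟩
  have h1a : 1 < a := lt_of_le_of_ne (mem_Icc.1 (hAn ha)).1 (Ne.symm ha1)
  have h1 := hS le_rfl h1a hA
  rw [comp_of_mem_of_notMem ha (by simpa using Ne.symm ha1), erase_singleton,
    LawfulSingleton.insert_empty_eq] at h1
  obtain ⟨d, hd⟩ := hI _ hA _ h1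
  simp only [mem_inter, mem_singleton] at hd
  omega

lemma card_hitting_le_of_forall_subset_Icc (hS : IsShifted 𝒜) {X : Finset ℕ}
    (hX : X ⊆ Icc 2 (n + 1)) (hXn : X ≠ Icc 2 (n + 1))
    (h : ∀ Y ⊆ Icc 2 n, #Y = #X → #(hitting 𝒜 Y) ≤ #(hitting (star (n + 1) r) Y)) :
    #(hitting 𝒜 X) ≤ #(hitting (star (n + 1) r) X) := by
  by_cases hnX : n + 1 ∈ X
  · obtain ⟨y, hy, hyX⟩ := exists_of_ssubset (Finset.ssubset_iff_subset_ne.2 ⟨hX, hXn⟩)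
    have hyn : y ≠ n + 1 := fun h => hyX (h ▸ hnX)
    have hy := mem_Icc.1 hy
    set Y := insert y (X.erase (n + 1))
    have hyY : y ∈ Y := mem_insert_self _ _
    have hnY : n + 1 ∉ Y := by simp [Y, hyn.symm]
    have hXY : insert (n + 1) (Y.erase y) = X := by
      rw [erase_insert fun h => hyX (mem_of_mem_erase h), insert_erase hnX]
    calc #(hitting 𝒜 X)
        ≤ #(hitting 𝒜 Y) :=
          hXY ▸ card_hitting_insert_erase_le hyY hnY fun _ hA => hS (by omega) (by omega) hA
      _ ≤ #(hitting (star (n + 1) r) Y) := by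
          refine h Y (fun a ha => ?_) ?_
          · rcases mem_insert.1 ha with rfl | ha
            · exact mem_Icc.2 ⟨hy.1, by omega⟩
            · obtain ⟨han, haX⟩ := mem_erase.1 ha
              have := mem_Icc.1 (hX haX)
              exact mem_Icc.2 ⟨this.1, by omega⟩
          · rw [card_insert_of_notMem fun h => hyX (mem_of_mem_erase h), card_erase_of_mem hnX]
            have := card_pos.2 ⟨_, hnX⟩
            omega
      _ ≤ #(hitting (star (n + 1) r) X) :=
          card_hitting_insert_erase_le hnX hyX fun _ hA =>
            comp_mem_star (by omega) le_rfl (by omega) hA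
  · refine h X (fun a ha => ?_) rfl
    have := mem_Icc.1 (hX ha)
    exact mem_Icc.2 ⟨this.1, by have : a ≠ n + 1 := fun h => hnX (h ▸ ha); omega⟩

end Bounds

def HittingBound (n r : ℕ) : Prop :=
  ∀ 𝒜 ⊆ uniformOn n r, IsShifted 𝒜 → IsIntersecting 𝒜 → ∀ X ⊆ Icc 2 n, r < #X →
    #(hitting 𝒜 X) ≤ #(hitting (star n r) X)

section HittingBound

variable {n r : ℕ}

lemma hittingBound_of_le_one (hr : r ≤ 1) : HittingBound n r := by
  intro 𝒜 h𝒜 hS hI X hX _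
  have h1X : 1 ∉ X := fun h => by have := mem_Icc.1 (hX h); omega
  suffices hitting 𝒜 X = ∅ by simp [this]
  refine filter_false_of_mem fun A hA ⟨a, ha⟩ => ?_
  rw [mem_inter] at ha
  exact h1X (mem_singleton.1 (subset_singleton_one_of_le_one hS hI h𝒜 hr hA ha.1) ▸ ha.2)

lemma sdiff_mem_hitting_star {X A : Finset ℕ} (hX : X ⊆ Icc 2 (2 * r)) (hXr : r < #X)
    (hA : A ∈ uniformOn (2 * r) r) (h1A : 1 ∉ A) :
    Icc 1 (2 * r) \ A ∈ hitting (star (2 * r) r) X := by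
  obtain ⟨hAn, hc⟩ := mem_uniformOn.1 hA
  obtain ⟨x, hxX, hxA⟩ := not_subset.1 fun h => (card_le_card h).not_gt (hc ▸ hXr)
  have := mem_Icc.1 (hX hxX)
  refine mem_hitting.2 ⟨mem_star.2 ⟨sdiff_subset, ?_, ?_⟩, x, ?_⟩
  · rw [card_sdiff_of_subset hAn, Nat.card_Icc, hc]; omega
  · exact mem_sdiff.2 ⟨mem_Icc.2 ⟨le_rfl, by omega⟩, h1A⟩
  · exact mem_inter.2 ⟨mem_sdiff.2 ⟨Icc_subset_Icc_left one_le_two (hX hxX), hxA⟩, hxX⟩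

lemma hittingBound_two_mul (r : ℕ) : HittingBound (2 * r) r := by
  intro 𝒜 h𝒜 _ hI X hX hXr
  refine card_le_card_of_injOn (fun A => if 1 ∈ A then A else Icc 1 (2 * r) \ A)
    (fun A hA => ?_) (fun A hA B hB hAB => ?_)
  · obtain ⟨hA, hAX⟩ := mem_hitting.1 hA
    dsimp only
    split_ifs with h1A
    · exact mem_hitting.2 ⟨mem_filter.2 ⟨h𝒜 hA, h1A⟩, hAX⟩
    · exact sdiff_mem_hitting_star hX hXr (h𝒜 hA) h1A
  · have hdisj : ∀ A ∈ hitting 𝒜 X, ∀ B ∈ hitting 𝒜 X, A ≠ Icc 1 (2 * r) \ B := by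
      rintro A hA B hB rfl
      obtain ⟨b, hb⟩ := hI _ (mem_hitting.1 hA).1 B (mem_hitting.1 hB).1
      simp only [mem_inter, mem_sdiff] at hb
      exact hb.1.2 hb.2
    have hsub : ∀ A ∈ hitting 𝒜 X, A ⊆ Icc 1 (2 * r) := fun A hA =>
      (mem_uniformOn.1 (h𝒜 (mem_hitting.1 hA).1)).1
    dsimp only at hAB
    split_ifs at hAB
    · exact hAB
    · exact absurd hAB (hdisj A hA B hB)
    · exact absurd hAB.symm (hdisj B hB A hA)
    · rw [← Finset.sdiff_sdiff_eq_self (hsub A hA), hAB, Finset.sdiff_sdiff_eq_self (hsub B hB)]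

lemma HittingBound.card_le_card_star (h : HittingBound n r) (hr : 1 ≤ r) (hn : 2 * r ≤ n)
    {𝒜 : Finset (Finset ℕ)} (h𝒜 : 𝒜 ⊆ uniformOn n r) (hS : IsShifted 𝒜) (hI : IsIntersecting 𝒜) :
    #𝒜 ≤ #(star n r) := by
  obtain rfl | hr := eq_or_lt_of_le hr
  · have h1 : ∀ A ∈ 𝒜, A = {1} := fun A hA =>
      eq_of_subset_of_card_le (subset_singleton_one_of_le_one hS hI h𝒜 le_rfl hA)
        (by rw [(mem_uniformOn.1 (h𝒜 hA)).2, card_singleton])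
    calc #𝒜 ≤ 1 := card_le_one.2 fun A hA B hB => (h1 A hA).trans (h1 B hB).symm
      _ ≤ #(star n 1) :=
        card_pos.2 ⟨{1}, mem_star.2 ⟨by simp; omega, card_singleton 1, mem_singleton_self 1⟩⟩
  · rw [← hitting_Icc_two_eq_self hr h𝒜, ← hitting_Icc_two_eq_self hr star_subset_uniformOn]
    exact h 𝒜 h𝒜 hS hI _ subset_rfl (by rw [Nat.card_Icc]; omega)

lemma hittingBound_succ (hr : 1 ≤ r) (hn : 2 * (r + 1) ≤ n) (h₁ : HittingBound n r)
    (h₂ : HittingBound n (r + 1)) : HittingBound (n + 1) (r + 1) := by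
  intro 𝒜 h𝒜 hS hI X hX hXr
  have h𝒜₁ := memberSubfamily_subset_uniformOn h𝒜
  have h𝒜₀ := nonMemberSubfamily_subset_uniformOn h𝒜
  have hS₁ := hS.memberSubfamily h𝒜
  have hS₀ := hS.nonMemberSubfamily h𝒜
  have hI₁ := hI.memberSubfamily hS h𝒜 (by omega)
  have hI₀ : IsIntersecting (𝒜.nonMemberSubfamily (n + 1)) := hI.mono (filter_subset _ _)
  obtain rfl | hXn := eq_or_ne X (Icc 2 (n + 1))
  · rw [hitting_Icc_two_eq_self (by omega) h𝒜,
      hitting_Icc_two_eq_self (by omega) star_subset_uniformOn,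
      ← card_memberSubfamily_add_card_nonMemberSubfamily (n + 1) 𝒜,
      ← card_memberSubfamily_add_card_nonMemberSubfamily (n + 1) (star _ _),
      star_memberSubfamily (by omega), star_nonMemberSubfamily]
    exact add_le_add (h₁.card_le_card_star hr (by omega) h𝒜₁ hS₁ hI₁)
      (h₂.card_le_card_star (by omega) hn h𝒜₀ hS₀ hI₀)
  · refine card_hitting_le_of_forall_subset_Icc hS hX hXn fun Y hY hYX => ?_
    have hnY : n + 1 ∉ Y := fun h => by have := mem_Icc.1 (hY h); omega
    rw [card_hitting_eq_add 𝒜 hnY, card_hitting_eq_add (star _ _) hnY,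
      star_memberSubfamily (by omega), star_nonMemberSubfamily]
    exact add_le_add (h₁ _ h𝒜₁ hS₁ hI₁ Y hY (by omega)) (h₂ _ h𝒜₀ hS₀ hI₀ Y hY (by omega))

theorem hittingBound (hn : 2 * r ≤ n) : HittingBound n r := by
  induction n generalizing r with
  | zero =>
    obtain rfl : r = 0 := by omega
    exact hittingBound_two_mul 0
  | succ n ih =>
    obtain hr | ⟨s, rfl, hs⟩ : r ≤ 1 ∨ ∃ s, r = s + 1 ∧ 1 ≤ s :=
      (le_or_gt r 1).imp_right fun h => ⟨r - 1, by omega, by omega⟩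
    · exact hittingBound_of_le_one hr
    obtain hn' | hn' := eq_or_lt_of_le hn
    · exact hn' ▸ hittingBound_two_mul (s + 1)
    · exact hittingBound_succ hs (by omega) (ih (by omega)) (ih (by omega))

end HittingBound

theorem stmt17_general (n r : ℕ) (hn : 2 * r ≤ n) (X : Finset ℕ)
    (hX : X ⊆ Icc 2 n) (hcard : r < X.card) : IsGood n r X :=
  fun 𝒜 h𝒜 hLC hI => hittingBound hn 𝒜 h𝒜 hLC.isShifted hI X hX hcard

theorem stmt17 (n r : ℕ) (hr : 2 ≤ r) (hn : 2 * r ≤ n) (X : Finset ℕ)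
    (hX : X ⊆ Icc 2 n) (hcard : r < X.card) : IsGood n r X :=
  stmt17_general n r hn X hX hcard
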